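/- arXiv:2305.11476 — 7 statements merged into one kernel-verified Lean document; each statement's English description precedes it below -/
import Mathlib

section
/- For any value functions V1, V2 on a finite state space S, the operator T+ defined by (T+ V)(s) = V(s) + E_{a,s'}[max(δ(s,a,s'), 0)], where δ(s,a,s') = r(s,a,s') + γ V(s') − V(s) and 0 ≤ γ < 1, is a non-expansion in the sup-norm: ‖T+ V1 − T+ V2‖_∞ ≤ ‖V1 − V2‖_∞. -/
open Finset

/-- The operator `T₊` defined by
`(T₊ V)(s) = V(s) + E_{a,s'}[max(δ(s,a,s'), 0)]`, with
`δ(s,a,s') = r(s,a,s') + γ V(s') − V(s)` and `0 ≤ γ < 1`,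
is a non-expansion in the sup-norm. -/
theorem Tplus_nonexpansion {S A : Type*} [Fintype S] [Nonempty S] [Fintype A] [Nonempty A]
    (pol : S → A → ℝ) (P : S → A → S → ℝ) (R : S → A → S → ℝ) (γ : ℝ)
    (hpol0 : ∀ s a, 0 ≤ pol s a) (hpol1 : ∀ s, ∑ a, pol s a = 1)
    (hP0 : ∀ s a s', 0 ≤ P s a s') (hP1 : ∀ s a, ∑ s', P s a s' = 1)
    (hγ0 : 0 ≤ γ) (hγ1 : γ < 1)
    (Tp : (S → ℝ) → (S → ℝ))
    (hTp : ∀ V s, Tp V s =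
      V s + ∑ a, ∑ s', pol s a * P s a s' * max (R s a s' + γ * V s' - V s) 0)
    (V1 V2 : S → ℝ) :
    ‖Tp V1 - Tp V2‖ ≤ ‖V1 - V2‖ := by
  have h1 : ∀ s : S, ∑ a, ∑ s', pol s a * P s a s' = 1 := by
    intro s
    simp_rw [← Finset.mul_sum, hP1, mul_one, hpol1]
  have key : ∀ (V : S → ℝ) (s : S), Tp V s =
      ∑ a, ∑ s', pol s a * P s a s' * max (R s a s' + γ * V s') (V s) := by
    intro V s
    have hterm : ∀ (a : A) (s' : S), pol s a * P s a s' * max (R s a s' + γ * V s') (V s)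
        = pol s a * P s a s' * V s
          + pol s a * P s a s' * max (R s a s' + γ * V s' - V s) 0 := by
      intro a s'
      have hmax : max (R s a s' + γ * V s') (V s)
          = V s + max (R s a s' + γ * V s' - V s) 0 := by
        rcases le_total (R s a s' + γ * V s') (V s) with h | h
        · rw [max_eq_right h, max_eq_right (by linarith), add_zero]
        · rw [max_eq_left h, max_eq_left (by linarith)]; ring
      rw [hmax]; ring
    have hw : ∑ a, ∑ s', pol s a * P s a s' * V s = V s := by
      simp_rw [← Finset.sum_mul, h1 s, one_mul]
    simp_rw [hterm, Finset.sum_add_distrib, hw]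
    rw [hTp]
  have hps : ∀ t : S, |V1 t - V2 t| ≤ ‖V1 - V2‖ := by
    intro t
    simpa [Real.norm_eq_abs] using norm_le_pi_norm (V1 - V2) t
  rw [pi_norm_le_iff_of_nonneg (norm_nonneg _)]
  intro s
  rw [Pi.sub_apply, key V1 s, key V2 s, Real.norm_eq_abs]
  simp_rw [← Finset.sum_sub_distrib, ← mul_sub]
  have hb : ∀ a ∈ Finset.univ, ∀ s' ∈ Finset.univ,
      |pol s a * P s a s' * (max (R s a s' + γ * V1 s') (V1 s)
        - max (R s a s' + γ * V2 s') (V2 s))|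
      ≤ pol s a * P s a s' * ‖V1 - V2‖ := by
    intro a _ s' _
    rw [abs_mul, abs_of_nonneg (mul_nonneg (hpol0 s a) (hP0 s a s'))]
    refine mul_le_mul_of_nonneg_left ?_ (mul_nonneg (hpol0 s a) (hP0 s a s'))
    refine le_trans (abs_max_sub_max_le_max _ _ _ _) (max_le ?_ ?_)
    · have : R s a s' + γ * V1 s' - (R s a s' + γ * V2 s') = γ * (V1 s' - V2 s') := by ring
      rw [this, abs_mul, abs_of_nonneg hγ0]
      calc γ * |V1 s' - V2 s'| ≤ 1 * ‖V1 - V2‖ :=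
            mul_le_mul hγ1.le (hps s') (abs_nonneg _) zero_le_one
        _ = ‖V1 - V2‖ := one_mul _
    · exact hps s
  calc |∑ a, ∑ s', pol s a * P s a s' * (max (R s a s' + γ * V1 s') (V1 s)
          - max (R s a s' + γ * V2 s') (V2 s))|
      ≤ ∑ a, ∑ s', |pol s a * P s a s' * (max (R s a s' + γ * V1 s') (V1 s)
          - max (R s a s' + γ * V2 s') (V2 s))| := by
        refine le_trans (Finset.abs_sum_le_sum_abs _ _) ?_
        exact Finset.sum_le_sum fun a _ => Finset.abs_sum_le_sum_abs _ _
    _ ≤ ∑ a, ∑ s', pol s a * P s a s' * ‖V1 - V2‖ :=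
        Finset.sum_le_sum fun a ha => Finset.sum_le_sum (hb a ha)
    _ = ‖V1 - V2‖ := by simp_rw [← Finset.sum_mul, h1 s, one_mul]
end

section
/- For any value functions V1, V2 on a finite state space S, the operator T− defined by (T− V)(s) = V(s) + E_{a,s'}[min(δ(s,a,s'), 0)], where δ(s,a,s') = r(s,a,s') + γ V(s') − V(s) and 0 ≤ γ < 1, is a non-expansion in the sup-norm: ‖T− V1 − T− V2‖_∞ ≤ ‖V1 − V2‖_∞. -/
open Finset

/-!
Since the weights `π(a|s) p(s'|s,a)` sum to one, `(T₋ V)(s) = E_{a,s'}[min (r + γ V(s')) (V(s))]`.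
Both arguments of this minimum move by at most `‖V₁ - V₂‖_∞` when `V₁` is replaced by `V₂`
(the first because `0 ≤ γ ≤ 1`), `min` is `1`-Lipschitz in the sup of the two changes, and
averaging preserves the bound.
-/

section WeightedSum

variable {ι : Type*} {t : Finset ι} {w : ι → ℝ}

theorem add_sum_mul_min_sub_eq_sum_mul_min (hw : ∑ i ∈ t, w i = 1) (x : ι → ℝ) (v : ℝ) :
    v + ∑ i ∈ t, w i * min (x i - v) 0 = ∑ i ∈ t, w i * min (x i) v :=
  calc v + ∑ i ∈ t, w i * min (x i - v) 0 = ∑ i ∈ t, (w i * v + w i * min (x i - v) 0) := by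
        rw [sum_add_distrib, ← sum_mul, hw, one_mul]
    _ = ∑ i ∈ t, w i * min (x i) v := sum_congr rfl fun i _ => by
        rw [← mul_add, ← min_add_add_left, add_sub_cancel, add_zero]

theorem abs_sum_mul_le_of_sum_eq_one (hw0 : ∀ i ∈ t, 0 ≤ w i) (hw1 : ∑ i ∈ t, w i = 1)
    {f : ι → ℝ} {N : ℝ} (hf : ∀ i ∈ t, |f i| ≤ N) : |∑ i ∈ t, w i * f i| ≤ N :=
  calc |∑ i ∈ t, w i * f i| ≤ ∑ i ∈ t, w i * |f i| := by
        refine (abs_sum_le_sum_abs _ _).trans_eq (sum_congr rfl fun i hi => ?_)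
        rw [abs_mul, abs_of_nonneg (hw0 i hi)]
    _ ≤ ∑ i ∈ t, w i * N := sum_le_sum fun i hi => mul_le_mul_of_nonneg_left (hf i hi) (hw0 i hi)
    _ = N := by rw [← sum_mul, hw1, one_mul]

end WeightedSum

theorem abs_min_add_mul_sub_min_add_mul_le {r γ a a' b b' N : ℝ} (hγ0 : 0 ≤ γ) (hγ1 : γ ≤ 1)
    (ha : |a - a'| ≤ N) (hb : |b - b'| ≤ N) :
    |min (r + γ * a) b - min (r + γ * a') b'| ≤ N := by
  refine (abs_min_sub_min_le_max _ _ _ _).trans (max_le ?_ hb)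
  calc |r + γ * a - (r + γ * a')| = γ * |a - a'| := by
        rw [add_sub_add_left_eq_sub, ← mul_sub, abs_mul, abs_of_nonneg hγ0]
    _ ≤ |a - a'| := mul_le_of_le_one_left (abs_nonneg _) hγ1
    _ ≤ N := ha

theorem Tminus_nonexpansion_general {S A : Type*} [Fintype S] [Fintype A]
    (pol : S → A → ℝ) (P : S → A → S → ℝ) (R : S → A → S → ℝ) (γ : ℝ)
    (hpol0 : ∀ s a, 0 ≤ pol s a) (hpol1 : ∀ s, ∑ a, pol s a = 1)
    (hP0 : ∀ s a s', 0 ≤ P s a s') (hP1 : ∀ s a, ∑ s', P s a s' = 1)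
    (hγ0 : 0 ≤ γ) (hγ1 : γ < 1)
    (Tm : (S → ℝ) → (S → ℝ))
    (hTm : ∀ V s, Tm V s =
      V s + ∑ a, ∑ s', pol s a * P s a s' * min (R s a s' + γ * V s' - V s) 0)
    (V1 V2 : S → ℝ) :
    ‖Tm V1 - Tm V2‖ ≤ ‖V1 - V2‖ := by
  have hV : ∀ t, |V1 t - V2 t| ≤ ‖V1 - V2‖ := fun t => by
    simpa [Real.norm_eq_abs] using norm_le_pi_norm (V1 - V2) t
  refine (pi_norm_le_iff_of_nonneg (norm_nonneg _)).2 fun s => ?_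
  set w : A × S → ℝ := fun p => pol s p.1 * P s p.1 p.2
  have hw1 : ∑ p, w p = 1 := by
    simp only [w, Fintype.sum_prod_type, ← mul_sum, hP1, mul_one, hpol1]
  have hTm_eq : ∀ V, Tm V s = ∑ p, w p * min (R s p.1 p.2 + γ * V p.2) (V s) := fun V => by
    rw [hTm, ← Fintype.sum_prod_type' (f := fun a s' => w (a, s') * _),
      add_sum_mul_min_sub_eq_sum_mul_min hw1]
  rw [Pi.sub_apply, Real.norm_eq_abs, hTm_eq, hTm_eq, ← sum_sub_distrib]
  simp_rw [← mul_sub]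
  exact abs_sum_mul_le_of_sum_eq_one (fun p _ => mul_nonneg (hpol0 s p.1) (hP0 s p.1 p.2)) hw1
    fun p _ => abs_min_add_mul_sub_min_add_mul_le hγ0 hγ1.le (hV p.2) (hV s)

/-- The operator `T₋` defined by
`(T₋ V)(s) = V(s) + E_{a,s'}[min(δ(s,a,s'), 0)]` is a non-expansion in the sup-norm. -/
theorem Tminus_nonexpansion {S A : Type*} [Fintype S] [Nonempty S] [Fintype A] [Nonempty A]
    (pol : S → A → ℝ) (P : S → A → S → ℝ) (R : S → A → S → ℝ) (γ : ℝ)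
    (hpol0 : ∀ s a, 0 ≤ pol s a) (hpol1 : ∀ s, ∑ a, pol s a = 1)
    (hP0 : ∀ s a s', 0 ≤ P s a s') (hP1 : ∀ s a, ∑ s', P s a s' = 1)
    (hγ0 : 0 ≤ γ) (hγ1 : γ < 1)
    (Tm : (S → ℝ) → (S → ℝ))
    (hTm : ∀ V s, Tm V s =
      V s + ∑ a, ∑ s', pol s a * P s a s' * min (R s a s' + γ * V s' - V s) 0)
    (V1 V2 : S → ℝ) :
    ‖Tm V1 - Tm V2‖ ≤ ‖V1 - V2‖ :=
  Tminus_nonexpansion_general pol P R γ hpol0 hpol1 hP0 hP1 hγ0 hγ1 Tm hTm V1 V2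
end

section
/- For any τ ∈ (0,1), the expectile Bellman operator T_τ, defined by (T_τ V)(s) = V(s) + 2α E_{a,s'}[τ·max(δ,0) + (1−τ)·min(δ,0)] with δ = r(s,a,s') + γ V(s') − V(s), is a contraction in the sup-norm with modulus γ_τ = 1 − 2α(1−γ)·min(τ, 1−τ), i.e., ‖T_τ V1 − T_τ V2‖_∞ ≤ γ_τ ‖V1 − V2‖_∞, provided 2α·max(τ,1−τ) ≤ 1. -/
/-!
Every difference quotient of `expectileScore τ` lies in `[min τ (1 - τ), max τ (1 - τ)]`. Hence
for a single transition `(s, a, s')` the two updates differ by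
`(1 - 2αc) (V₁ s - V₂ s) + 2αcγ (V₁ s' - V₂ s')` for such a slope `c`. The step-size condition
makes both coefficients nonnegative, so this is at most `(1 - 2αc(1 - γ)) ‖V₁ - V₂‖ ≤ γ_τ ‖V₁ - V₂‖`
in absolute value, and averaging over `a` and `s'` keeps the bound.
-/

open Finset

/-- `T_τ` is a gradient step of size `α` on the expectile loss `|τ - 𝟙(δ < 0)| δ²`, whose
derivative in `δ` is `2 * expectileScore τ δ`. -/
noncomputable def expectileScore (τ x : ℝ) : ℝ := τ * max x 0 + (1 - τ) * min x 0

section expectileScore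

variable {τ x y : ℝ}

lemma min_mul_sub_le_expectileScore_sub (hyx : y ≤ x) :
    min τ (1 - τ) * (x - y) ≤ expectileScore τ x - expectileScore τ y := by
  have hp : max y 0 ≤ max x 0 := max_le_max hyx le_rfl
  have hq : min y 0 ≤ min x 0 := min_le_min hyx le_rfl
  have hx := max_add_min x 0
  have hy := max_add_min y 0
  unfold expectileScore
  nlinarith [min_le_left τ (1 - τ), min_le_right τ (1 - τ)]

lemma expectileScore_sub_le_max_mul_sub (hyx : y ≤ x) :
    expectileScore τ x - expectileScore τ y ≤ max τ (1 - τ) * (x - y) := by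
  have hp : max y 0 ≤ max x 0 := max_le_max hyx le_rfl
  have hq : min y 0 ≤ min x 0 := min_le_min hyx le_rfl
  have hx := max_add_min x 0
  have hy := max_add_min y 0
  unfold expectileScore
  nlinarith [le_max_left τ (1 - τ), le_max_right τ (1 - τ)]

lemma exists_expectileScore_sub_eq_mul (x y : ℝ) :
    ∃ c ∈ Set.Icc (min τ (1 - τ)) (max τ (1 - τ)),
      expectileScore τ x - expectileScore τ y = c * (x - y) := by
  wlog hyx : y ≤ x generalizing x y
  · obtain ⟨c, hc, h⟩ := this y x (le_of_not_ge hyx)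
    exact ⟨c, hc, by linarith⟩
  rcases hyx.eq_or_lt with rfl | hlt
  · exact ⟨min τ (1 - τ), ⟨le_rfl, min_le_max⟩, by ring⟩
  have hpos : 0 < x - y := sub_pos.2 hlt
  refine ⟨(expectileScore τ x - expectileScore τ y) / (x - y), ⟨?_, ?_⟩, by field_simp⟩
  · exact (le_div_iff₀ hpos).2 (min_mul_sub_le_expectileScore_sub hyx)
  · exact (div_le_iff₀ hpos).2 (expectileScore_sub_le_max_mul_sub hyx)

lemma abs_add_two_mul_expectileScore_sub_le {α γ r u₁ u₂ v₁ v₂ D : ℝ} (hτ0 : 0 ≤ τ)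
    (hτ1 : τ ≤ 1) (hγ0 : 0 ≤ γ) (hγ1 : γ ≤ 1) (hα0 : 0 ≤ α) (hα : 2 * α * max τ (1 - τ) ≤ 1)
    (hu : |u₁ - u₂| ≤ D) (hv : |v₁ - v₂| ≤ D) :
    |u₁ + 2 * α * expectileScore τ (r + γ * v₁ - u₁)
        - (u₂ + 2 * α * expectileScore τ (r + γ * v₂ - u₂))|
      ≤ (1 - 2 * α * (1 - γ) * min τ (1 - τ)) * D := by
  obtain ⟨c, ⟨hmc, hcM⟩, hc⟩ :=
    exists_expectileScore_sub_eq_mul (τ := τ) (r + γ * v₁ - u₁) (r + γ * v₂ - u₂)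
  have hc0 : 0 ≤ c := (le_min hτ0 (sub_nonneg.2 hτ1)).trans hmc
  have hstep : 0 ≤ 1 - 2 * α * c := by nlinarith [mul_le_mul_of_nonneg_left hcM hα0]
  have hgain : 0 ≤ 2 * α * c * γ := by positivity
  have hD : 0 ≤ D := (abs_nonneg _).trans hu
  calc |u₁ + 2 * α * expectileScore τ (r + γ * v₁ - u₁)
          - (u₂ + 2 * α * expectileScore τ (r + γ * v₂ - u₂))|
      = |(1 - 2 * α * c) * (u₁ - u₂) + 2 * α * c * γ * (v₁ - v₂)| := by
        rw [add_sub_add_comm, ← mul_sub, hc]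
        congr 1
        ring
    _ ≤ |(1 - 2 * α * c) * (u₁ - u₂)| + |2 * α * c * γ * (v₁ - v₂)| := abs_add_le _ _
    _ = (1 - 2 * α * c) * |u₁ - u₂| + 2 * α * c * γ * |v₁ - v₂| := by
        rw [abs_mul, abs_mul, abs_of_nonneg hstep, abs_of_nonneg hgain]
    _ ≤ (1 - 2 * α * c) * D + 2 * α * c * γ * D := by gcongr
    _ = (1 - 2 * α * (1 - γ) * c) * D := by ring
    _ ≤ (1 - 2 * α * (1 - γ) * min τ (1 - τ)) * D := by gcongr

end expectileScore

section finiteKernel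

variable {A S : Type*} [Fintype A] [Fintype S] {p : A → ℝ} {q : A → S → ℝ}

lemma sum_sum_mul_mul_const (hp : ∑ a, p a = 1) (hq : ∀ a, ∑ s, q a s = 1) (c : ℝ) :
    ∑ a, ∑ s, p a * q a s * c = c := by
  simp only [← sum_mul, ← mul_sum, hq, mul_one, hp, one_mul]

lemma add_mul_sum_sum_eq_sum_sum (hp : ∑ a, p a = 1) (hq : ∀ a, ∑ s, q a s = 1)
    (c k : ℝ) (g : A → S → ℝ) :
    c + k * ∑ a, ∑ s, p a * q a s * g a s = ∑ a, ∑ s, p a * q a s * (c + k * g a s) := by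
  simp only [mul_add, sum_add_distrib, sum_sum_mul_mul_const hp hq, mul_sum, mul_left_comm k]

lemma abs_sum_mul_le {ι : Type*} [Fintype ι] {w z : ι → ℝ} {B : ℝ} (hw0 : ∀ i, 0 ≤ w i)
    (hw : ∑ i, w i = 1) (hz : ∀ i, |z i| ≤ B) : |∑ i, w i * z i| ≤ B :=
  abs_le.2 <| (convex_Icc (-B) B).sum_mem (fun i _ => hw0 i) hw fun i _ => abs_le.1 (hz i)

lemma abs_sum_sum_mul_mul_le (hp0 : ∀ a, 0 ≤ p a) (hp : ∑ a, p a = 1)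
    (hq0 : ∀ a s, 0 ≤ q a s) (hq : ∀ a, ∑ s, q a s = 1) {z : A → S → ℝ} {B : ℝ}
    (hz : ∀ a s, |z a s| ≤ B) : |∑ a, ∑ s, p a * q a s * z a s| ≤ B := by
  simp only [mul_assoc, ← mul_sum]
  exact abs_sum_mul_le hp0 hp fun a => abs_sum_mul_le (hq0 a) (hq a) (hz a)

end finiteKernel

theorem expectile_contraction_general {S A : Type*} [Fintype S] [Fintype A]
    (pol : S → A → ℝ) (P : S → A → S → ℝ) (R : S → A → S → ℝ) (γ α τ : ℝ)
    (hpol0 : ∀ s a, 0 ≤ pol s a) (hpol1 : ∀ s, ∑ a, pol s a = 1)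
    (hP0 : ∀ s a s', 0 ≤ P s a s') (hP1 : ∀ s a, ∑ s', P s a s' = 1)
    (hγ0 : 0 ≤ γ) (hγ1 : γ < 1) (hτ0 : 0 < τ) (hτ1 : τ < 1)
    (hα0 : 0 < α) (hα : 2 * α * max τ (1 - τ) ≤ 1)
    (Tτ : (S → ℝ) → (S → ℝ))
    (hTτ : ∀ V s, Tτ V s =
      V s + 2 * α * ∑ a, ∑ s', pol s a * P s a s' *
        (τ * max (R s a s' + γ * V s' - V s) 0
          + (1 - τ) * min (R s a s' + γ * V s' - V s) 0))
    (V1 V2 : S → ℝ) :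
    ‖Tτ V1 - Tτ V2‖ ≤ (1 - 2 * α * (1 - γ) * min τ (1 - τ)) * ‖V1 - V2‖ := by
  have hdist (s : S) : |V1 s - V2 s| ≤ ‖V1 - V2‖ := by
    simpa only [Real.norm_eq_abs, Pi.sub_apply] using norm_le_pi_norm (V1 - V2) s
  have hmodulus : 0 ≤ 1 - 2 * α * (1 - γ) * min τ (1 - τ) := by
    have hm : 0 ≤ min τ (1 - τ) := le_min hτ0.le (by linarith)
    nlinarith [mul_nonneg (mul_nonneg hα0.le hγ0) hm,
      mul_le_mul_of_nonneg_left (min_le_max (a := τ) (b := 1 - τ)) hα0.le]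
  refine (pi_norm_le_iff_of_nonneg (mul_nonneg hmodulus (norm_nonneg _))).2 fun s => ?_
  rw [Real.norm_eq_abs, Pi.sub_apply, hTτ, hTτ, add_mul_sum_sum_eq_sum_sum (hpol1 s) (hP1 s),
    add_mul_sum_sum_eq_sum_sum (hpol1 s) (hP1 s)]
  simp only [← sum_sub_distrib, ← mul_sub]
  exact abs_sum_sum_mul_mul_le (hpol0 s) (hpol1 s) (hP0 s) (hP1 s) fun a s' =>
    abs_add_two_mul_expectileScore_sub_le hτ0.le hτ1.le hγ0 hγ1.le hα0.le hα
      (hdist s) (hdist s')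

/-- For `τ ∈ (0,1)`, the expectile Bellman operator `T_τ` is a
`γ_τ`-contraction in the sup-norm with `γ_τ = 1 − 2α(1−γ)·min(τ, 1−τ)`,
provided `2α·max(τ,1−τ) ≤ 1`. -/
theorem expectile_contraction {S A : Type*} [Fintype S] [Nonempty S] [Fintype A] [Nonempty A]
    (pol : S → A → ℝ) (P : S → A → S → ℝ) (R : S → A → S → ℝ) (γ α τ : ℝ)
    (hpol0 : ∀ s a, 0 ≤ pol s a) (hpol1 : ∀ s, ∑ a, pol s a = 1)
    (hP0 : ∀ s a s', 0 ≤ P s a s') (hP1 : ∀ s a, ∑ s', P s a s' = 1)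
    (hγ0 : 0 ≤ γ) (hγ1 : γ < 1) (hτ0 : 0 < τ) (hτ1 : τ < 1)
    (hα0 : 0 < α) (hα : 2 * α * max τ (1 - τ) ≤ 1)
    (Tτ : (S → ℝ) → (S → ℝ))
    (hTτ : ∀ V s, Tτ V s =
      V s + 2 * α * ∑ a, ∑ s', pol s a * P s a s' *
        (τ * max (R s a s' + γ * V s' - V s) 0
          + (1 - τ) * min (R s a s' + γ * V s' - V s) 0))
    (V1 V2 : S → ℝ) :
    ‖Tτ V1 - Tτ V2‖ ≤ (1 - 2 * α * (1 - γ) * min τ (1 - τ)) * ‖V1 - V2‖ :=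
  expectile_contraction_general pol P R γ α τ hpol0 hpol1 hP0 hP1 hγ0 hγ1 hτ0 hτ1 hα0 hα Tτ hTτ V1
    V2
end

section
/- Let V*_τ and V*_{τ'} denote the unique fixed points of the expectile Bellman operators T_τ and T_{τ'} respectively. If τ' ≥ τ with τ, τ' ∈ (0,1), then V*_{τ'}(s) ≥ V*_τ(s) for every state s. -/
/-!
Maximum principle: at a state `s₀` where `Vτ - Vτ'` attains its maximum `M`, assumed positive,
every temporal-difference error of `Vτ'` exceeds the corresponding one of `Vτ` by at least
`(1 - γ) M > 0`. Since `τ max(δ,0) + (1-τ) min(δ,0)` is nondecreasing in `τ` and, for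
`0 < τ < 1`, strictly increasing in `δ`, the expected correction of `Vτ'` at `s₀` is strictly larger than
that of `Vτ`; but both vanish at fixed points.
-/

open Finset

def expectileCorrection (τ δ : ℝ) : ℝ := τ * max δ 0 + (1 - τ) * min δ 0

lemma expectileCorrection_le_of_le {τ τ' : ℝ} (h : τ ≤ τ') (δ : ℝ) :
    expectileCorrection τ δ ≤ expectileCorrection τ' δ := by
  unfold expectileCorrection
  nlinarith [le_max_right δ 0, min_le_right δ 0]

lemma strictMono_expectileCorrection {τ : ℝ} (h0 : 0 < τ) (h1 : τ < 1) :
    StrictMono (expectileCorrection τ) := by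
  intro x y hxy
  unfold expectileCorrection
  rcases le_or_gt 0 x with hx | hx
  · have hy := hx.trans hxy.le
    rw [max_eq_left hx, min_eq_right hx, max_eq_left hy, min_eq_right hy]
    nlinarith
  rcases le_or_gt y 0 with hy | hy
  · rw [max_eq_right hx.le, min_eq_left hx.le, max_eq_right hy, min_eq_left hy]
    nlinarith
  rw [max_eq_right hx.le, min_eq_left hx.le, max_eq_left hy.le, min_eq_right hy.le]
  nlinarith [mul_pos h0 hy, mul_pos (sub_pos.2 h1) (neg_pos.2 hx)]

lemma sum_mul_lt_sum_mul_of_forall_lt {ι R : Type*} [CommRing R] [LinearOrder R]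
    [IsStrictOrderedRing R] {s : Finset ι} {w f g : ι → R} (hw0 : ∀ i ∈ s, 0 ≤ w i)
    (hw : ∑ i ∈ s, w i ≠ 0) (hfg : ∀ i ∈ s, f i < g i) :
    ∑ i ∈ s, w i * f i < ∑ i ∈ s, w i * g i := by
  obtain ⟨i, hi, hwi⟩ := exists_ne_zero_of_sum_ne_zero hw
  exact sum_lt_sum (fun j hj => mul_le_mul_of_nonneg_left (hfg j hj).le (hw0 j hj))
    ⟨i, hi, mul_lt_mul_of_pos_left (hfg i hi) ((hw0 i hi).lt_of_ne' hwi)⟩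

lemma sum_sum_mul_lt_of_forall_lt {A S : Type*} [Fintype A] [Fintype S] {p : A → ℝ}
    {q f g : A → S → ℝ} (hp0 : ∀ a, 0 ≤ p a) (hp1 : ∑ a, p a = 1) (hq0 : ∀ a s, 0 ≤ q a s)
    (hq1 : ∀ a, ∑ s, q a s = 1) (hfg : ∀ a s, f a s < g a s) :
    ∑ a, ∑ s, p a * q a s * f a s < ∑ a, ∑ s, p a * q a s * g a s := by
  simp_rw [mul_assoc, ← mul_sum]
  exact sum_mul_lt_sum_mul_of_forall_lt (fun a _ => hp0 a) (by simp [hp1]) fun a _ =>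
    sum_mul_lt_sum_mul_of_forall_lt (fun s _ => hq0 a s) (by simp [hq1]) fun s _ => hfg a s

section

variable {S A : Type*} [Fintype S] [Fintype A]

def expectileTD (pol : S → A → ℝ) (P R : S → A → S → ℝ) (γ τ : ℝ) (V : S → ℝ) (s : S) : ℝ :=
  ∑ a, ∑ s', pol s a * P s a s' * expectileCorrection τ (R s a s' + γ * V s' - V s)

lemma expectileTD_eq_zero_of_fixed {pol : S → A → ℝ} {P R : S → A → S → ℝ} {γ α τ : ℝ}
    {T : (S → ℝ) → (S → ℝ)} {V : S → ℝ} (hα : α ≠ 0)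
    (hT : ∀ V s, T V s = V s + 2 * α * expectileTD pol P R γ τ V s) (hV : T V = V) (s : S) :
    expectileTD pol P R γ τ V s = 0 := by
  have h := hT V s
  rw [hV, left_eq_add] at h
  exact (mul_eq_zero.mp h).resolve_left (mul_ne_zero two_ne_zero hα)

lemma expectileTD_lt_of_forall_sub_le {pol : S → A → ℝ} {P R : S → A → S → ℝ} {γ τ τ' : ℝ}
    (hpol0 : ∀ s a, 0 ≤ pol s a) (hpol1 : ∀ s, ∑ a, pol s a = 1)
    (hP0 : ∀ s a s', 0 ≤ P s a s') (hP1 : ∀ s a, ∑ s', P s a s' = 1)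
    (hγ0 : 0 ≤ γ) (hγ1 : γ < 1) (hτ'0 : 0 < τ') (hτ'1 : τ' < 1) (hττ' : τ ≤ τ')
    {V W : S → ℝ} {s₀ : S} (hmax : ∀ s, V s - W s ≤ V s₀ - W s₀) (hpos : 0 < V s₀ - W s₀) :
    expectileTD pol P R γ τ V s₀ < expectileTD pol P R γ τ' W s₀ := by
  refine sum_sum_mul_lt_of_forall_lt (hpol0 s₀) (hpol1 s₀) (hP0 s₀) (hP1 s₀) fun a s' => ?_
  have hδ : R s₀ a s' + γ * V s' - V s₀ < R s₀ a s' + γ * W s' - W s₀ := by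
    nlinarith [mul_le_mul_of_nonneg_left (hmax s') hγ0]
  calc expectileCorrection τ (R s₀ a s' + γ * V s' - V s₀)
      ≤ expectileCorrection τ' (R s₀ a s' + γ * V s' - V s₀) :=
        expectileCorrection_le_of_le hττ' _
    _ < expectileCorrection τ' (R s₀ a s' + γ * W s' - W s₀) :=
        strictMono_expectileCorrection hτ'0 hτ'1 hδ

end

theorem expectile_fixed_point_monotone_general {S A : Type*}
    [Fintype S] [Fintype A]
    (pol : S → A → ℝ) (P : S → A → S → ℝ) (R : S → A → S → ℝ) (γ α τ τ' : ℝ)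
    (hpol0 : ∀ s a, 0 ≤ pol s a) (hpol1 : ∀ s, ∑ a, pol s a = 1)
    (hP0 : ∀ s a s', 0 ≤ P s a s') (hP1 : ∀ s a, ∑ s', P s a s' = 1)
    (hγ0 : 0 ≤ γ) (hγ1 : γ < 1)
    (hτ'0 : 0 < τ') (hτ'1 : τ' < 1) (hττ' : τ ≤ τ')
    (hα0 : 0 < α)
    (Tτ Tτ' : (S → ℝ) → (S → ℝ))
    (hTτ : ∀ V s, Tτ V s =
      V s + 2 * α * ∑ a, ∑ s', pol s a * P s a s' *
        (τ * max (R s a s' + γ * V s' - V s) 0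
          + (1 - τ) * min (R s a s' + γ * V s' - V s) 0))
    (hTτ' : ∀ V s, Tτ' V s =
      V s + 2 * α * ∑ a, ∑ s', pol s a * P s a s' *
        (τ' * max (R s a s' + γ * V s' - V s) 0
          + (1 - τ') * min (R s a s' + γ * V s' - V s) 0))
    (Vτ Vτ' : S → ℝ) (hfix : Tτ Vτ = Vτ) (hfix' : Tτ' Vτ' = Vτ') :
    ∀ s, Vτ s ≤ Vτ' s := by
  intro s
  by_contra! hs
  obtain ⟨s₀, -, hmax⟩ := exists_max_image univ (fun s => Vτ s - Vτ' s) ⟨s, mem_univ s⟩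
  have hpos : 0 < Vτ s₀ - Vτ' s₀ := by linarith [hmax s (mem_univ s)]
  have hlt := expectileTD_lt_of_forall_sub_le (R := R) hpol0 hpol1 hP0 hP1 hγ0 hγ1 hτ'0 hτ'1
    hττ' (fun s => hmax s (mem_univ s)) hpos
  rw [expectileTD_eq_zero_of_fixed hα0.ne' hTτ hfix,
    expectileTD_eq_zero_of_fixed hα0.ne' hTτ' hfix'] at hlt
  exact hlt.false

/-- If `V*_τ` and `V*_{τ'}` are the (unique) fixed points of the
expectile Bellman operators `T_τ` and `T_{τ'}` and `τ' ≥ τ`, then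
`V*_{τ'}(s) ≥ V*_τ(s)` for every state `s`. -/
theorem expectile_fixed_point_monotone {S A : Type*}
    [Fintype S] [Nonempty S] [Fintype A] [Nonempty A]
    (pol : S → A → ℝ) (P : S → A → S → ℝ) (R : S → A → S → ℝ) (γ α τ τ' : ℝ)
    (hpol0 : ∀ s a, 0 ≤ pol s a) (hpol1 : ∀ s, ∑ a, pol s a = 1)
    (hP0 : ∀ s a s', 0 ≤ P s a s') (hP1 : ∀ s a, ∑ s', P s a s' = 1)
    (hγ0 : 0 ≤ γ) (hγ1 : γ < 1)
    (hτ0 : 0 < τ) (hτ1 : τ < 1) (hτ'0 : 0 < τ') (hτ'1 : τ' < 1) (hττ' : τ ≤ τ')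
    (hα0 : 0 < α) (hα : 2 * α * max τ (1 - τ) ≤ 1) (hα' : 2 * α * max τ' (1 - τ') ≤ 1)
    (Tτ Tτ' : (S → ℝ) → (S → ℝ))
    (hTτ : ∀ V s, Tτ V s =
      V s + 2 * α * ∑ a, ∑ s', pol s a * P s a s' *
        (τ * max (R s a s' + γ * V s' - V s) 0
          + (1 - τ) * min (R s a s' + γ * V s' - V s) 0))
    (hTτ' : ∀ V s, Tτ' V s =
      V s + 2 * α * ∑ a, ∑ s', pol s a * P s a s' *
        (τ' * max (R s a s' + γ * V s' - V s) 0
          + (1 - τ') * min (R s a s' + γ * V s' - V s) 0))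
    (Vτ Vτ' : S → ℝ) (hfix : Tτ Vτ = Vτ) (hfix' : Tτ' Vτ' = Vτ') :
    ∀ s, Vτ s ≤ Vτ' s :=
  expectile_fixed_point_monotone_general pol P R γ α τ τ' hpol0 hpol1 hP0 hP1 hγ0 hγ1 hτ'0 hτ'1 hττ'
    hα0 Tτ Tτ' hTτ hTτ' Vτ Vτ' hfix hfix'
end

section
/- Each operator T_τ (for τ ∈ (0,1)), T+, and T− is pointwise monotone in its value function argument: if V1(s) ≤ V2(s) for all s, then (T_τ V1)(s) ≤ (T_τ V2)(s) for all s, and similarly for T+ and T−, provided γ ∈ [0,1) and 2α·max(τ,1−τ) ≤ 1. -/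
/-!
Write `E_{a,b}(x) = a·max(x,0) + b·min(x,0)`; all three operators have the form
`V s + E[E_{a,b}(δ)]` with `a, b ∈ [0,1]` (`(1,0)`, `(0,1)` and `(2ατ, 2α(1-τ))`).
Since `E_{a,b}` is nondecreasing with slopes at most `1`, each summand
`V s + E_{a,b}(r + γ V s' - V s)` is nondecreasing both in `V s` and in `V s'`; because
the transition weights sum to one, `V s` can be moved inside the expectation.
-/

open Finset

noncomputable section

def asymmetricError (a b x : ℝ) : ℝ := a * max x 0 + b * min x 0

lemma asymmetricError_mono {a b : ℝ} (ha : 0 ≤ a) (hb : 0 ≤ b) :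
    Monotone (asymmetricError a b) := by
  intro x y hxy
  unfold asymmetricError
  gcongr

lemma asymmetricError_sub_le {a b x y : ℝ} (ha1 : a ≤ 1) (hb1 : b ≤ 1) (hxy : x ≤ y) :
    asymmetricError a b y - asymmetricError a b x ≤ y - x := by
  have hmax : 0 ≤ max y 0 - max x 0 := sub_nonneg.2 (max_le_max_right 0 hxy)
  have hmin : 0 ≤ min y 0 - min x 0 := sub_nonneg.2 (min_le_min_right 0 hxy)
  have hsplit : y - x = (max y 0 - max x 0) + (min y 0 - min x 0) := by
    linarith [min_add_max x 0, min_add_max y 0]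
  unfold asymmetricError
  nlinarith

lemma add_asymmetricError_le {a b γ c u₁ u₂ w₁ w₂ : ℝ} (ha : 0 ≤ a) (hb : 0 ≤ b)
    (ha1 : a ≤ 1) (hb1 : b ≤ 1) (hγ : 0 ≤ γ) (hu : u₁ ≤ u₂) (hw : w₁ ≤ w₂) :
    u₁ + asymmetricError a b (c + γ * w₁ - u₁) ≤ u₂ + asymmetricError a b (c + γ * w₂ - u₂) := by
  have in_u := asymmetricError_sub_le ha1 hb1 (x := c + γ * w₁ - u₂)
    (y := c + γ * w₁ - u₁) (by linarith)
  have in_w : asymmetricError a b (c + γ * w₁ - u₂) ≤ asymmetricError a b (c + γ * w₂ - u₂) :=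
    asymmetricError_mono ha hb (by gcongr)
  linarith

lemma sum_sum_mul_mul_eq_of_sum_eq_one {ι κ : Type*} [Fintype ι] [Fintype κ]
    (p : ι → ℝ) (q : ι → κ → ℝ) (hp : ∑ i, p i = 1) (hq : ∀ i, ∑ j, q i j = 1) (x : ℝ) :
    ∑ i, ∑ j, p i * q i j * x = x := by
  simp_rw [mul_comm (p _), mul_assoc, ← sum_mul, hq, one_mul, ← sum_mul, hp, one_mul]

def asymmetricTDOperator {S A : Type*} [Fintype S] [Fintype A]
    (pol : S → A → ℝ) (P R : S → A → S → ℝ) (γ a b : ℝ) (V : S → ℝ) (s : S) : ℝ :=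
  V s + ∑ a', ∑ s', pol s a' * P s a' s' * asymmetricError a b (R s a' s' + γ * V s' - V s)

theorem asymmetricTDOperator_mono {S A : Type*} [Fintype S] [Fintype A]
    {pol : S → A → ℝ} {P R : S → A → S → ℝ} {γ a b : ℝ}
    (hpol0 : ∀ s a, 0 ≤ pol s a) (hpol1 : ∀ s, ∑ a, pol s a = 1)
    (hP0 : ∀ s a s', 0 ≤ P s a s') (hP1 : ∀ s a, ∑ s', P s a s' = 1)
    (hγ : 0 ≤ γ) (ha : 0 ≤ a) (hb : 0 ≤ b) (ha1 : a ≤ 1) (hb1 : b ≤ 1) :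
    Monotone (asymmetricTDOperator pol P R γ a b) := by
  intro V₁ V₂ hV s
  have inside (V : S → ℝ) : asymmetricTDOperator pol P R γ a b V s =
      ∑ a', ∑ s', pol s a' * P s a' s' *
        (V s + asymmetricError a b (R s a' s' + γ * V s' - V s)) := by
    simp_rw [mul_add, sum_add_distrib,
      sum_sum_mul_mul_eq_of_sum_eq_one _ _ (hpol1 s) (hP1 s)]
    rfl
  rw [inside, inside]
  refine sum_le_sum fun a' _ ↦ sum_le_sum fun s' _ ↦ mul_le_mul_of_nonneg_left ?_ ?_
  · exact add_asymmetricError_le ha hb ha1 hb1 hγ (hV s) (hV s')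
  · exact mul_nonneg (hpol0 s a') (hP0 s a' s')

theorem operators_monotone_in_value_general {S A : Type*}
    [Fintype S] [Fintype A]
    (pol : S → A → ℝ) (P : S → A → S → ℝ) (R : S → A → S → ℝ) (γ α τ : ℝ)
    (hpol0 : ∀ s a, 0 ≤ pol s a) (hpol1 : ∀ s, ∑ a, pol s a = 1)
    (hP0 : ∀ s a s', 0 ≤ P s a s') (hP1 : ∀ s a, ∑ s', P s a s' = 1)
    (hγ0 : 0 ≤ γ) (hτ0 : 0 < τ) (hτ1 : τ < 1)
    (hα0 : 0 < α) (hα : 2 * α * max τ (1 - τ) ≤ 1)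
    (Tτ Tp Tm : (S → ℝ) → (S → ℝ))
    (hTτ : ∀ V s, Tτ V s =
      V s + 2 * α * ∑ a, ∑ s', pol s a * P s a s' *
        (τ * max (R s a s' + γ * V s' - V s) 0
          + (1 - τ) * min (R s a s' + γ * V s' - V s) 0))
    (hTp : ∀ V s, Tp V s =
      V s + ∑ a, ∑ s', pol s a * P s a s' * max (R s a s' + γ * V s' - V s) 0)
    (hTm : ∀ V s, Tm V s =
      V s + ∑ a, ∑ s', pol s a * P s a s' * min (R s a s' + γ * V s' - V s) 0) :
    ∀ V1 V2 : S → ℝ, (∀ s, V1 s ≤ V2 s) →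
      (∀ s, Tτ V1 s ≤ Tτ V2 s) ∧ (∀ s, Tp V1 s ≤ Tp V2 s) ∧ (∀ s, Tm V1 s ≤ Tm V2 s) := by
  intro V1 V2 hV
  have mono := @asymmetricTDOperator_mono S A _ _ pol P R γ
  have hTτ' : Tτ = asymmetricTDOperator pol P R γ (2 * α * τ) (2 * α * (1 - τ)) := by
    ext V s
    simp only [hTτ, asymmetricTDOperator, asymmetricError, mul_sum]
    congr! 3 with a' _ s' _
    ring
  have hTp' : Tp = asymmetricTDOperator pol P R γ 1 0 := by
    ext V s
    simp [hTp, asymmetricTDOperator, asymmetricError]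
  have hTm' : Tm = asymmetricTDOperator pol P R γ 0 1 := by
    ext V s
    simp [hTm, asymmetricTDOperator, asymmetricError]
  have hτα : 2 * α * τ ≤ 1 := le_trans (by gcongr; exact le_max_left _ _) hα
  have hτα' : 2 * α * (1 - τ) ≤ 1 := le_trans (by gcongr; exact le_max_right _ _) hα
  refine ⟨?_, ?_, ?_⟩
  · rw [hTτ']
    exact mono hpol0 hpol1 hP0 hP1 hγ0 (by positivity) (by nlinarith) hτα hτα' hV
  · rw [hTp']
    exact mono hpol0 hpol1 hP0 hP1 hγ0 zero_le_one le_rfl le_rfl zero_le_one hV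
  · rw [hTm']
    exact mono hpol0 hpol1 hP0 hP1 hγ0 le_rfl zero_le_one zero_le_one le_rfl hV

/-- Each of `T_τ`, `T₊` and `T₋` is pointwise monotone in its
value-function argument. -/
theorem operators_monotone_in_value {S A : Type*}
    [Fintype S] [Nonempty S] [Fintype A] [Nonempty A]
    (pol : S → A → ℝ) (P : S → A → S → ℝ) (R : S → A → S → ℝ) (γ α τ : ℝ)
    (hpol0 : ∀ s a, 0 ≤ pol s a) (hpol1 : ∀ s, ∑ a, pol s a = 1)
    (hP0 : ∀ s a s', 0 ≤ P s a s') (hP1 : ∀ s a, ∑ s', P s a s' = 1)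
    (hγ0 : 0 ≤ γ) (hγ1 : γ < 1) (hτ0 : 0 < τ) (hτ1 : τ < 1)
    (hα0 : 0 < α) (hα : 2 * α * max τ (1 - τ) ≤ 1)
    (Tτ Tp Tm : (S → ℝ) → (S → ℝ))
    (hTτ : ∀ V s, Tτ V s =
      V s + 2 * α * ∑ a, ∑ s', pol s a * P s a s' *
        (τ * max (R s a s' + γ * V s' - V s) 0
          + (1 - τ) * min (R s a s' + γ * V s' - V s) 0))
    (hTp : ∀ V s, Tp V s =
      V s + ∑ a, ∑ s', pol s a * P s a s' * max (R s a s' + γ * V s' - V s) 0)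
    (hTm : ∀ V s, Tm V s =
      V s + ∑ a, ∑ s', pol s a * P s a s' * min (R s a s' + γ * V s' - V s) 0) :
    ∀ V1 V2 : S → ℝ, (∀ s, V1 s ≤ V2 s) →
      (∀ s, Tτ V1 s ≤ Tτ V2 s) ∧ (∀ s, Tp V1 s ≤ Tp V2 s) ∧ (∀ s, Tm V1 s ≤ Tm V2 s) :=
  operators_monotone_in_value_general pol P R γ α τ hpol0 hpol1 hP0 hP1 hγ0 hτ0 hτ1 hα0 hα Tτ Tp Tm
    hTτ hTp hTm

end
end

section
/- The worst-case value function V*_worst, defined as the fixed point of (T_worst V)(s) = min over (a,s') with π(a|s) > 0 and p(s'|s,a) > 0 of [r(s,a,s') + γ V(s')], is a fixed point of the operator T− given by (T− V)(s) = V(s) + E_{a,s'}[min(δ,0)]: that is, T− V*_worst = V*_worst. -/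
/-!
Being the minimum of `r + γ V*_worst(s')` over the supported pairs `(a, s')`, `V*_worst(s)` lies
below each of these targets, so the temporal difference `δ` is nonnegative wherever the weight
`π(a|s) p(s'|s,a)` is positive. Hence every term `π p min(δ, 0)` of the correction in `T₋` vanishes.
-/

open Finset

theorem mul_mul_min_sub_eq_zero {p q x v : ℝ} (hp : 0 ≤ p) (hq : 0 ≤ q)
    (h : 0 < p → 0 < q → v ≤ x) : p * q * min (x - v) 0 = 0 := by
  rcases hp.eq_or_lt with rfl | hp
  · simp
  rcases hq.eq_or_lt with rfl | hq
  · simp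
  rw [min_eq_right (sub_nonneg.2 (h hp hq)), mul_zero]

theorem worst_fixed_point_of_Tminus_general {S A : Type*}
    [Fintype S] [Fintype A]
    (pol : S → A → ℝ) (P : S → A → S → ℝ) (R : S → A → S → ℝ) (γ : ℝ)
    (hpol0 : ∀ s a, 0 ≤ pol s a)
    (hP0 : ∀ s a s', 0 ≤ P s a s')
    (hne : ∀ s : S, ((univ : Finset (A × S)).filter
      (fun x => 0 < pol s x.1 ∧ 0 < P s x.1 x.2)).Nonempty)
    (Vw : S → ℝ)
    (hVw : ∀ s, Vw s = ((univ : Finset (A × S)).filter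
      (fun x => 0 < pol s x.1 ∧ 0 < P s x.1 x.2)).inf' (hne s)
      (fun x => R s x.1 x.2 + γ * Vw x.2))
    (Tm : (S → ℝ) → (S → ℝ))
    (hTm : ∀ V s, Tm V s =
      V s + ∑ a, ∑ s', pol s a * P s a s' * min (R s a s' + γ * V s' - V s) 0) :
    Tm Vw = Vw := by
  have hle_target : ∀ s a s', 0 < pol s a → 0 < P s a s' → Vw s ≤ R s a s' + γ * Vw s' := by
    intro s a s' ha hs'
    rw [hVw s]
    exact inf'_le _ (mem_filter.2 ⟨mem_univ (a, s'), ha, hs'⟩)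
  funext s
  rw [hTm, add_eq_left]
  exact sum_eq_zero fun a _ => sum_eq_zero fun s' _ =>
    mul_mul_min_sub_eq_zero (hpol0 s a) (hP0 s a s') (hle_target s a s')

/-- The worst-case value function `V*_worst`, the fixed point of the
worst-case Bellman operator (minimum over supported `(a,s')` pairs of
`r(s,a,s') + γ V(s')`), is a fixed point of `T₋`. -/
theorem worst_fixed_point_of_Tminus {S A : Type*}
    [Fintype S] [Nonempty S] [Fintype A] [Nonempty A]
    (pol : S → A → ℝ) (P : S → A → S → ℝ) (R : S → A → S → ℝ) (γ : ℝ)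
    (hpol0 : ∀ s a, 0 ≤ pol s a) (hpol1 : ∀ s, ∑ a, pol s a = 1)
    (hP0 : ∀ s a s', 0 ≤ P s a s') (hP1 : ∀ s a, ∑ s', P s a s' = 1)
    (hγ0 : 0 ≤ γ) (hγ1 : γ < 1)
    (hne : ∀ s : S, ((univ : Finset (A × S)).filter
      (fun x => 0 < pol s x.1 ∧ 0 < P s x.1 x.2)).Nonempty)
    (Vw : S → ℝ)
    (hVw : ∀ s, Vw s = ((univ : Finset (A × S)).filter
      (fun x => 0 < pol s x.1 ∧ 0 < P s x.1 x.2)).inf' (hne s)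
      (fun x => R s x.1 x.2 + γ * Vw x.2))
    (Tm : (S → ℝ) → (S → ℝ))
    (hTm : ∀ V s, Tm V s =
      V s + ∑ a, ∑ s', pol s a * P s a s' * min (R s a s' + γ * V s' - V s) 0) :
    Tm Vw = Vw :=
  worst_fixed_point_of_Tminus_general pol P R γ hpol0 hP0 hne Vw hVw Tm hTm
end

section
/- The standard multi-step (λ-return) Bellman operator equals the value function plus the Generalized Advantage Estimator: for a trajectory with rewards r_t and γ, λ ∈ [0,1) with γλ < 1, (1−λ) Σ_{n=1}^∞ λ^{n−1} (T^π)^n V(s_t) = V(s_t) + Σ_{l=0}^∞ (γλ)^l δ_{t+l}, where (T^π)^n V(s_t) = Σ_{l=0}^{n−1} γ^l r_{t+l} + γ^n V(s_{t+n}) and δ_t = r_t + γ V(s_{t+1}) − V(s_t). -/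
/-!
Telescoping the TD errors gives `(T^π)^{n+1} V(s_t) = V(s_t) + Σ_{l≤n} γ^l δ_{t+l}`. Weighting by
`λ^n = λ^l λ^{n-l}` turns `Σ_n λ^n Σ_{l≤n} γ^l δ_{t+l}` into the Cauchy product of the geometric
series `Σ λ^k = (1-λ)⁻¹` with the GAE series `Σ (γλ)^l δ_{t+l}`; absolute convergence of a
summable real series justifies the product.
-/

open Finset

theorem sum_range_pow_mul_tdError {R : Type*} [CommRing R] (r v : ℕ → R) (γ : R) (t n : ℕ) :
    ∑ l ∈ range n, γ ^ l * (r (t + l) + γ * v (t + l + 1) - v (t + l))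
      = (∑ l ∈ range n, γ ^ l * r (t + l)) + γ ^ n * v (t + n) - v t := by
  have hsplit : ∀ l, γ ^ l * (r (t + l) + γ * v (t + l + 1) - v (t + l))
      = γ ^ l * r (t + l) + (γ ^ (l + 1) * v (t + (l + 1)) - γ ^ l * v (t + l)) := fun l => by
    rw [← add_assoc]; ring
  rw [sum_congr rfl fun l _ => hsplit l, sum_add_distrib,
    sum_range_sub (fun j => γ ^ j * v (t + j))]
  simp only [pow_zero, one_mul, add_zero]
  ring

theorem hasSum_sum_range_geometric_mul {c : ℝ} (hc : |c| < 1) {b : ℕ → ℝ} (hb : Summable b) :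
    HasSum (fun n => ∑ l ∈ range (n + 1), b l * c ^ (n - l)) ((∑' l, b l) * (1 - c)⁻¹) := by
  have hb_norm : Summable fun l => ‖b l‖ := hb.norm
  have hc_norm : Summable fun k => ‖c ^ k‖ := (summable_geometric_of_abs_lt_one hc).norm
  rw [← tsum_geometric_of_abs_lt_one hc,
    tsum_mul_tsum_eq_tsum_sum_range_of_summable_norm hb_norm hc_norm]
  exact (summable_norm_sum_mul_range_of_summable_norm hb_norm hc_norm).of_norm.hasSum

theorem pow_mul_sum_range_eq_sum_range_mul_pow_sub {R : Type*} [CommRing R]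
    (a : ℕ → R) (γ c : R) (n : ℕ) :
    c ^ n * ∑ l ∈ range (n + 1), γ ^ l * a l
      = ∑ l ∈ range (n + 1), (γ * c) ^ l * a l * c ^ (n - l) := by
  rw [mul_sum]
  refine sum_congr rfl fun l hl => ?_
  rw [← pow_mul_pow_sub c (Nat.lt_succ_iff.mp (mem_range.mp hl)), mul_pow]
  ring

theorem lambda_return_eq_gae_general
    (r v : ℕ → ℝ) (γ lam : ℝ)
    (hlam0 : 0 ≤ lam) (hlam1 : lam < 1)
    (Tn : ℕ → ℕ → ℝ)
    (hTn : ∀ n t, Tn n t = (∑ l ∈ range n, γ ^ l * r (t + l)) + γ ^ n * v (t + n))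
    (δ : ℕ → ℝ) (hδ : ∀ t, δ t = r t + γ * v (t + 1) - v t)
    (hsum2 : ∀ t, Summable (fun l : ℕ => (γ * lam) ^ l * δ (t + l))) :
    ∀ t, (1 - lam) * ∑' n : ℕ, lam ^ n * Tn (n + 1) t
      = v t + ∑' l : ℕ, (γ * lam) ^ l * δ (t + l) := by
  intro t
  have hlam : |lam| < 1 := by rwa [abs_of_nonneg hlam0]
  have hreturn : ∀ n, lam ^ n * Tn (n + 1) t
      = lam ^ n * v t + ∑ l ∈ range (n + 1), (γ * lam) ^ l * δ (t + l) * lam ^ (n - l) := by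
    intro n
    have htd : ∀ l, δ (t + l) = r (t + l) + γ * v (t + l + 1) - v (t + l) := fun l => hδ (t + l)
    rw [← pow_mul_sum_range_eq_sum_range_mul_pow_sub, sum_congr rfl fun l _ => by rw [htd l],
      sum_range_pow_mul_tdError, hTn]
    ring
  have hsum : HasSum (fun n => lam ^ n * Tn (n + 1) t)
      ((1 - lam)⁻¹ * v t + (∑' l, (γ * lam) ^ l * δ (t + l)) * (1 - lam)⁻¹) := by
    simp only [hreturn]
    exact ((hasSum_geometric_of_abs_lt_one hlam).mul_right (v t)).add
      (hasSum_sum_range_geometric_mul hlam (hsum2 t))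
  have hne : 1 - lam ≠ 0 := (sub_pos.mpr hlam1).ne'
  rw [hsum.tsum_eq]
  field_simp

/-- Along a fixed trajectory with bounded rewards `r` and a bounded
value function `v`, the λ-return Bellman operator equals the value function plus
the Generalized Advantage Estimator:
`(1−λ) Σ_{n≥1} λ^{n−1} (T^π)^n V(s_t) = V(s_t) + Σ_{l≥0} (γλ)^l δ_{t+l}`,
where `(T^π)^n V(s_t) = Σ_{l<n} γ^l r_{t+l} + γ^n V(s_{t+n})` and
`δ_t = r_t + γ V(s_{t+1}) − V(s_t)`. -/
theorem lambda_return_eq_gae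
    (r v : ℕ → ℝ) (γ lam : ℝ)
    (hγ0 : 0 ≤ γ) (hγ1 : γ < 1) (hlam0 : 0 ≤ lam) (hlam1 : lam < 1)
    (hγlam : γ * lam < 1)
    (hrb : ∃ M : ℝ, ∀ t, |r t| ≤ M) (hvb : ∃ M : ℝ, ∀ t, |v t| ≤ M)
    (Tn : ℕ → ℕ → ℝ)
    (hTn : ∀ n t, Tn n t = (∑ l ∈ range n, γ ^ l * r (t + l)) + γ ^ n * v (t + n))
    (δ : ℕ → ℝ) (hδ : ∀ t, δ t = r t + γ * v (t + 1) - v t)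
    (hsum1 : ∀ t, Summable (fun n : ℕ => lam ^ n * Tn (n + 1) t))
    (hsum2 : ∀ t, Summable (fun l : ℕ => (γ * lam) ^ l * δ (t + l))) :
    ∀ t, (1 - lam) * ∑' n : ℕ, lam ^ n * Tn (n + 1) t
      = v t + ∑' l : ℕ, (γ * lam) ^ l * δ (t + l) :=
  lambda_return_eq_gae_general r v γ lam hlam0 hlam1 Tn hTn δ hδ hsum2
end
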